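/- Let 1 < p < 2 with conjugate exponent q = p/(p−1), and let G be a graph on [n] with maximum clique size k. Then for any vector f ∈ ℝ^n with ‖f‖₂ = 1, Σ_{i∼j} |f_i|^q |f_j|^q ≤ φ_{q/2}(k), where the sum is over ordered adjacent pairs. -/

import Mathlib

/-! A Motzkin–Straus argument. Write `x = f²`, so `x ≥ 0`, `∑ x = 1` and `|f i| ^ q = x i ^ θ` with
`θ = q / 2 ≥ 1`. If the support of `x` is a clique it has at most `k` vertices, and `x` is (up to
relabelling and zero entries) a competitor in the supremum defining `φ_θ(k)`. Otherwise pick two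
nonadjacent vertices `i, j` of the support. In `z = x ^ θ` the adjacency form has no `z i z j`,
`z i ²` or `z j ²` terms, so it is affine in `(z i, z j)`; moving all the mass of `x` at `i, j` to
the vertex with the larger coefficient does not decrease it, because `x i ^ θ + x j ^ θ ≤
(x i + x j) ^ θ`. This shrinks the support, and induction on its size finishes the proof. -/

/-- `φ_θ(k) = sup { ∑_{i ≠ j} |v i|^θ |v j|^θ : v ∈ ℝ^k, ‖v‖₁ = 1 }`. -/
noncomputable def phiVar (θ : ℝ) (k : ℕ) : ℝ :=
  ⨆ v : {v : Fin k → ℝ // ∑ i, |v i| = 1},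
    ∑ i : Fin k, ∑ j : Fin k, if i ≠ j then |v.1 i| ^ θ * |v.1 j| ^ θ else 0

open Finset Matrix Function

theorem sum_comp_extend_zero {α β R M : Type*} [Fintype α] [Fintype β] [Zero R]
    [AddCommMonoid M] {e : α → β} (he : Injective e) (y : α → R) {h : R → M} (h0 : h 0 = 0) :
    ∑ b, h (extend e y 0 b) = ∑ a, h (y a) := by
  classical
  rw [← sum_subset (subset_univ (univ.map ⟨e, he⟩)), sum_map]
  · simp only [Embedding.coeFn_mk, he.extend_apply]
  · intro b _ hb
    rw [extend_apply' _ _ _ (by simpa using hb), Pi.zero_apply, h0]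

theorem sum_sum_ite_ne_mul {ι R : Type*} [Fintype ι] [DecidableEq ι] [CommRing R] (a : ι → R) :
    ∑ i, ∑ j, (if i ≠ j then a i * a j else 0) = (∑ i, a i) ^ 2 - ∑ i, a i ^ 2 := by
  have h : ∀ i j, (if i ≠ j then a i * a j else 0) = a i * a j - if i = j then a i * a j else 0 :=
    fun i j => by split_ifs <;> simp_all
  simp [h, sum_sub_distrib, sq, sum_mul_sum]

theorem le_phiVar {θ : ℝ} (hθ : 0 ≤ θ) {k : ℕ} (v : Fin k → ℝ) (hv : ∑ i, |v i| = 1) :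
    (∑ i, ∑ j, if i ≠ j then |v i| ^ θ * |v j| ^ θ else 0) ≤ phiVar θ k := by
  refine le_ciSup (f := fun v : {v : Fin k → ℝ // ∑ i, |v i| = 1} =>
    ∑ i, ∑ j, if i ≠ j then |v.1 i| ^ θ * |v.1 j| ^ θ else 0) ⟨k * k, ?_⟩ ⟨v, hv⟩
  rintro _ ⟨⟨w, hw⟩, rfl⟩
  have hw1 : ∀ i, |w i| ^ θ ≤ 1 := fun i =>
    Real.rpow_le_one (abs_nonneg _)
      (hw ▸ single_le_sum (fun j _ => abs_nonneg (w j)) (mem_univ i)) hθ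
  calc (∑ i, ∑ j, if i ≠ j then |w i| ^ θ * |w j| ^ θ else 0)
      ≤ ∑ _i : Fin k, ∑ _j : Fin k, (1 : ℝ) := by
        gcongr with i _ j _
        split_ifs
        · exact mul_le_one₀ (hw1 i) (by positivity) (hw1 j)
        · exact zero_le_one
    _ = k * k := by simp

theorem sum_ne_rpow_le_phiVar {V : Type*} [Fintype V] [DecidableEq V] {θ : ℝ} (hθ : 0 < θ)
    {k : ℕ} (x : V → ℝ) (hx : ∑ u, |x u| = 1) (hk : #{u | x u ≠ 0} ≤ k) :
    ∑ u, ∑ w, (if u ≠ w then |x u| ^ θ * |x w| ^ θ else 0) ≤ phiVar θ k := by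
  set S : Finset V := {u | x u ≠ 0}
  let e : S ↪ Fin k := S.equivFin.toEmbedding.trans (Fin.castLEEmb hk)
  let v : Fin k → ℝ := extend e (fun a => x a) 0
  have hv : ∀ {h : ℝ → ℝ}, h 0 = 0 → ∑ t, h (v t) = ∑ u, h (x u) := fun {h} h0 => by
    rw [sum_comp_extend_zero e.injective _ h0, sum_coe_sort S (fun u => h (x u))]
    exact sum_filter_of_ne fun u _ hu hxu => hu (by rw [hxu, h0])
  have h0 : (0 : ℝ) ^ θ = 0 := Real.zero_rpow hθ.ne'
  calc ∑ u, ∑ w, (if u ≠ w then |x u| ^ θ * |x w| ^ θ else 0)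
      = ∑ t, ∑ t', (if t ≠ t' then |v t| ^ θ * |v t'| ^ θ else 0) := by
        rw [sum_sum_ite_ne_mul (fun u => |x u| ^ θ), sum_sum_ite_ne_mul (fun t => |v t| ^ θ),
          hv (h := fun r => |r| ^ θ) (by simp [h0]),
          hv (h := fun r => (|r| ^ θ) ^ 2) (by simp [h0])]
    _ ≤ phiVar θ k := le_phiVar hθ.le v ((hv abs_zero).trans hx)

section moveMass

variable {V : Type*} [DecidableEq V]

/-- The vector `x` with its mass at `j` moved onto `i`. -/
def moveMass (x : V → ℝ) (j i : V) : V → ℝ := x + Pi.single i (x j) - Pi.single j (x j)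

variable {x : V → ℝ} {i j : V}

theorem moveMass_apply_left (hij : i ≠ j) : moveMass x j i i = x i + x j := by
  simp [moveMass, hij]

theorem moveMass_apply_right (hij : i ≠ j) : moveMass x j i j = 0 := by
  simp [moveMass, hij.symm]

theorem moveMass_apply_of_ne {u : V} (hi : u ≠ i) (hj : u ≠ j) : moveMass x j i u = x u := by
  simp [moveMass, hi, hj]

theorem sum_moveMass [Fintype V] : ∑ u, moveMass x j i u = ∑ u, x u := by
  simp [moveMass, sum_add_distrib, sum_sub_distrib]

theorem moveMass_nonneg (hx : 0 ≤ x) : 0 ≤ moveMass x j i := by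
  intro u
  simp only [moveMass, Pi.add_apply, Pi.sub_apply, Pi.single_apply]
  have := hx u
  have := hx j
  split_ifs <;> simp_all; linarith

theorem filter_moveMass_ne_zero_ssubset [Fintype V] (hi : x i ≠ 0) (hj : x j ≠ 0) (hij : i ≠ j) :
    ({u | moveMass x j i u ≠ 0} : Finset V) ⊂ ({u | x u ≠ 0} : Finset V) := by
  refine (ssubset_iff_of_subset fun u hu => ?_).2
    ⟨j, by simpa using hj, by simp [moveMass_apply_right hij]⟩
  simp only [mem_filter, mem_univ, true_and] at hu ⊢
  by_cases hui : u = i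
  · exact hui ▸ hi
  by_cases huj : u = j
  · subst huj
    exact absurd (moveMass_apply_right hij) hu
  rwa [moveMass_apply_of_ne hui huj] at hu

end moveMass

section Graph

variable {V : Type*} [Fintype V] [DecidableEq V] (G : SimpleGraph V) [DecidableRel G.Adj]

theorem SimpleGraph.dotProduct_mulVec_adjMatrix_add_single_add_single {i j : V}
    (hij : ¬ G.Adj i j) (z : V → ℝ) (a b : ℝ) :
    (z + Pi.single i a + Pi.single j b) ⬝ᵥ G.adjMatrix ℝ *ᵥ (z + Pi.single i a + Pi.single j b)
      = z ⬝ᵥ G.adjMatrix ℝ *ᵥ z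
          + 2 * (a * (G.adjMatrix ℝ *ᵥ z) i + b * (G.adjMatrix ℝ *ᵥ z) j) := by
  set d : V → ℝ := Pi.single i a + Pi.single j b
  have hsymm : z ⬝ᵥ G.adjMatrix ℝ *ᵥ d = d ⬝ᵥ G.adjMatrix ℝ *ᵥ z := by
    rw [dotProduct_mulVec, ← mulVec_transpose, G.transpose_adjMatrix, dotProduct_comm]
  have hdz : d ⬝ᵥ G.adjMatrix ℝ *ᵥ z = a * (G.adjMatrix ℝ *ᵥ z) i + b * (G.adjMatrix ℝ *ᵥ z) j := by
    simp only [d, add_dotProduct, single_dotProduct]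
  have hdd : d ⬝ᵥ G.adjMatrix ℝ *ᵥ d = 0 := by
    simp [d, mulVec_add, add_dotProduct, single_dotProduct, hij, G.adj_comm j i]
  rw [add_assoc, add_dotProduct, mulVec_add, dotProduct_add, dotProduct_add, hsymm, hdz, hdd]
  ring

theorem SimpleGraph.dotProduct_mulVec_adjMatrix_rpow_le_moveMass {θ : ℝ} (hθ : 1 ≤ θ)
    {x : V → ℝ} (hx : 0 ≤ x) {i j : V} (hij : i ≠ j) (hadj : ¬ G.Adj i j)
    (hz : (G.adjMatrix ℝ *ᵥ (x · ^ θ)) j ≤ (G.adjMatrix ℝ *ᵥ (x · ^ θ)) i) :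
    (x · ^ θ) ⬝ᵥ G.adjMatrix ℝ *ᵥ (x · ^ θ)
      ≤ (moveMass x j i · ^ θ) ⬝ᵥ G.adjMatrix ℝ *ᵥ (moveMass x j i · ^ θ) := by
  have hmove : (moveMass x j i · ^ θ)
      = (x · ^ θ) + Pi.single i ((x i + x j) ^ θ - x i ^ θ) + Pi.single j (-x j ^ θ) := by
    funext u
    by_cases hi : u = i
    · subst hi
      simp [moveMass_apply_left hij, hij]
    by_cases hj : u = j
    · subst hj
      simp [moveMass_apply_right hij, hi, Real.zero_rpow (zero_lt_one.trans_le hθ).ne']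
    simp [moveMass_apply_of_ne hi hj, hi, hj]
  have hsuper := Real.add_rpow_le_rpow_add (hx i) (hx j) hθ
  have hzj : 0 ≤ (G.adjMatrix ℝ *ᵥ (x · ^ θ)) j := by
    rw [G.adjMatrix_mulVec_apply]
    exact sum_nonneg fun u _ => Real.rpow_nonneg (hx u) θ
  rw [hmove, G.dotProduct_mulVec_adjMatrix_add_single_add_single hadj]
  nlinarith [mul_le_mul_of_nonneg_right hsuper (hzj.trans hz),
    mul_le_mul_of_nonneg_left hz (Real.rpow_nonneg (hx j) θ)]

theorem SimpleGraph.dotProduct_mulVec_adjMatrix_le_sum_ne {z : V → ℝ} (hz : 0 ≤ z) :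
    z ⬝ᵥ G.adjMatrix ℝ *ᵥ z ≤ ∑ u, ∑ w, if u ≠ w then z u * z w else 0 := by
  rw [dotProduct_mulVec_adjMatrix]
  gcongr with u _ w _
  split_ifs with hadj hne hne
  · exact le_rfl
  · exact absurd (G.ne_of_adj hadj) hne
  · exact mul_nonneg (hz u) (hz w)
  · exact le_rfl

theorem SimpleGraph.exists_le_dotProduct_mulVec_adjMatrix_rpow {θ : ℝ} (hθ : 1 ≤ θ)
    {x : V → ℝ} (hx : 0 ≤ x) {i j : V} (hi : x i ≠ 0) (hj : x j ≠ 0) (hij : i ≠ j)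
    (hadj : ¬ G.Adj i j) :
    ∃ y : V → ℝ, 0 ≤ y ∧ ∑ u, y u = ∑ u, x u ∧ #{u | y u ≠ 0} < #{u | x u ≠ 0} ∧
      (x · ^ θ) ⬝ᵥ G.adjMatrix ℝ *ᵥ (x · ^ θ) ≤ (y · ^ θ) ⬝ᵥ G.adjMatrix ℝ *ᵥ (y · ^ θ) := by
  wlog hz : (G.adjMatrix ℝ *ᵥ (x · ^ θ)) j ≤ (G.adjMatrix ℝ *ᵥ (x · ^ θ)) i generalizing i j
  · exact this hj hi hij.symm (fun h => hadj h.symm) (le_of_not_ge hz)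
  exact ⟨moveMass x j i, moveMass_nonneg hx, sum_moveMass,
    card_lt_card (filter_moveMass_ne_zero_ssubset hi hj hij),
    G.dotProduct_mulVec_adjMatrix_rpow_le_moveMass hθ hx hij hadj hz⟩

theorem SimpleGraph.dotProduct_mulVec_adjMatrix_rpow_le_phiVar {θ : ℝ} (hθ : 1 ≤ θ) {k : ℕ}
    (hk : ∀ s : Finset V, G.IsClique (s : Set V) → #s ≤ k) {x : V → ℝ} (hx0 : 0 ≤ x)
    (hx1 : ∑ u, x u = 1) :
    (x · ^ θ) ⬝ᵥ G.adjMatrix ℝ *ᵥ (x · ^ θ) ≤ phiVar θ k := by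
  induction hm : #{u | x u ≠ 0} using Nat.strong_induction_on generalizing x with
  | _ m ih =>
  by_cases hS : G.IsClique (({u | x u ≠ 0} : Finset V) : Set V)
  · have habs : ∀ u, |x u| = x u := fun u => abs_of_nonneg (hx0 u)
    calc (x · ^ θ) ⬝ᵥ G.adjMatrix ℝ *ᵥ (x · ^ θ)
        ≤ ∑ u, ∑ w, if u ≠ w then x u ^ θ * x w ^ θ else 0 :=
          G.dotProduct_mulVec_adjMatrix_le_sum_ne fun u => Real.rpow_nonneg (hx0 u) θ
      _ ≤ phiVar θ k := by
          simpa only [habs] using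
            sum_ne_rpow_le_phiVar (by linarith) x (by simpa only [habs]) (hk _ hS)
  · obtain ⟨i, hi, j, hj, hij, hadj⟩ : ∃ i, x i ≠ 0 ∧ ∃ j, x j ≠ 0 ∧ i ≠ j ∧ ¬ G.Adj i j := by
      simpa [SimpleGraph.IsClique, Set.Pairwise] using hS
    obtain ⟨y, hy0, hy1, hym, hle⟩ :=
      G.exists_le_dotProduct_mulVec_adjMatrix_rpow hθ hx0 hi hj hij hadj
    exact hle.trans (ih _ (hm ▸ hym) hy0 (hy1.trans hx1) rfl)

end Graph

theorem sum_adj_pow_le_phiVar_general {n : ℕ}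
    (p : ℝ) (hp1 : 1 < p) (hp2 : p < 2) (q : ℝ) (hq : q = p / (p - 1))
    (k : ℕ)
    (G : SimpleGraph (Fin n)) [DecidableRel G.Adj]
    (hclique_max : ∀ s : Finset (Fin n), G.IsClique (s : Set (Fin n)) → s.card ≤ k)
    (f : Fin n → ℝ) (hf : ∑ i, (f i) ^ 2 = 1) :
    (∑ i : Fin n, ∑ j : Fin n,
        if G.Adj i j then |f i| ^ q * |f j| ^ q else 0) ≤ phiVar (q / 2) k := by
  have hθ : 1 ≤ q / 2 := by
    rw [hq, le_div_iff₀ two_pos, le_div_iff₀ (by linarith)]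
    linarith
  have hpow : ∀ i, (f i ^ 2) ^ (q / 2) = |f i| ^ q := fun i => by
    rw [← sq_abs, ← Real.rpow_natCast, ← Real.rpow_mul (abs_nonneg _)]
    ring_nf
  have h := G.dotProduct_mulVec_adjMatrix_rpow_le_phiVar hθ hclique_max (x := (f · ^ 2))
    (fun i => sq_nonneg (f i)) hf
  simpa only [SimpleGraph.dotProduct_mulVec_adjMatrix, hpow] using h

/-- For `1 < p < 2` with conjugate `q = p/(p−1)`, and `G` a graph on `[n]` with maximum
clique size `k`, for any `f` with `‖f‖₂ = 1`,
`∑_{i∼j} |f i|^q |f j|^q ≤ φ_{q/2}(k)` (sum over ordered adjacent pairs). -/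
theorem sum_adj_pow_le_phiVar {n : ℕ}
    (p : ℝ) (hp1 : 1 < p) (hp2 : p < 2) (q : ℝ) (hq : q = p / (p - 1))
    (k : ℕ) (hk : 2 ≤ k)
    (G : SimpleGraph (Fin n)) [DecidableRel G.Adj]
    (hclique_ex : ∃ s : Finset (Fin n), G.IsNClique k s)
    (hclique_max : ∀ s : Finset (Fin n), G.IsClique (s : Set (Fin n)) → s.card ≤ k)
    (f : Fin n → ℝ) (hf : ∑ i, (f i) ^ 2 = 1) :
    (∑ i : Fin n, ∑ j : Fin n,
        if G.Adj i j then |f i| ^ q * |f j| ^ q else 0) ≤ phiVar (q / 2) k :=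
  sum_adj_pow_le_phiVar_general p hp1 hp2 q hq k G hclique_max f hf
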